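/- Let {A_β}_{β ∈ B} be a direct system of abelian groups indexed by a directed set B, and let G be an injective abelian group. Then the first derived functor of the inverse limit of the induced inverse system {Hom(A_β, G)} vanishes: lim¹ Hom(A_β, G) = 0. -/

import Mathlib

set_option autoImplicit false
open Function

namespace Paper


/-! ## Generic subquotients `ker g ⧸ im f` (no need for `g ∘ f = 0`) -/

section SubQuot

variable {A B C A' B' C' D : Type}
variable [AddCommGroup A] [AddCommGroup B] [AddCommGroup C]
variable [AddCommGroup A'] [AddCommGroup B'] [AddCommGroup C'] [AddCommGroup D]

/-- The subquotient `ker g ⧸ (im f ∩ ker g)` of the "middle" group `B`. -/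
def SubQuot (f : A →+ B) (g : B →+ C) : Type :=
  g.ker ⧸ (f.range.addSubgroupOf g.ker)

instance (f : A →+ B) (g : B →+ C) : AddCommGroup (SubQuot f g) :=
  inferInstanceAs (AddCommGroup (g.ker ⧸ (f.range.addSubgroupOf g.ker)))

/-- the class of a cycle -/
def SubQuot.mk (f : A →+ B) (g : B →+ C) (b : B) (hb : g b = 0) : SubQuot f g :=
  QuotientAddGroup.mk (⟨b, hb⟩ : g.ker)

lemma SubQuot.mk_congr (f : A →+ B) (g : B →+ C) {b b' : B} (h : b = b')
    (hb : g b = 0) (hb' : g b' = 0) : SubQuot.mk f g b hb = SubQuot.mk f g b' hb' := by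
  subst h; rfl

lemma SubQuot.mk_surjective (f : A →+ B) (g : B →+ C) :
    ∀ x : SubQuot f g, ∃ b hb, SubQuot.mk f g b hb = x := by
  intro x
  refine QuotientAddGroup.induction_on x ?_
  intro b
  exact ⟨b.1, b.2, rfl⟩

/-- Functoriality of subquotients: a map of middle groups compatible with kernels and images
induces a map of subquotients. -/
def SubQuot.map {f : A →+ B} {g : B →+ C} {f' : A' →+ B'} {g' : B' →+ C'}
    (u : B →+ B') (hker : ∀ b, g b = 0 → g' (u b) = 0)
    (hrange : ∀ a : A, ∃ a' : A', f' a' = u (f a)) :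
    SubQuot f g →+ SubQuot f' g' := by
  refine QuotientAddGroup.map _ _
    ((u.comp g.ker.subtype).codRestrict g'.ker (fun x => ?_)) ?_
  · exact AddMonoidHom.mem_ker.mpr (hker x.1 (AddMonoidHom.mem_ker.mp x.2))
  · intro x hx
    rcases (AddSubgroup.mem_addSubgroupOf).mp hx with ⟨a, ha⟩
    refine AddSubgroup.mem_comap.mpr ((AddSubgroup.mem_addSubgroupOf).mpr ?_)
    rcases hrange a with ⟨a', ha'⟩
    exact ⟨a', by simp [ha', ha]⟩

@[simp] lemma SubQuot.map_mk {f : A →+ B} {g : B →+ C} {f' : A' →+ B'} {g' : B' →+ C'}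
    (u : B →+ B') (hker : ∀ b, g b = 0 → g' (u b) = 0)
    (hrange : ∀ a : A, ∃ a' : A', f' a' = u (f a)) (b : B) (hb : g b = 0) :
    SubQuot.map u hker hrange (SubQuot.mk f g b hb) = SubQuot.mk f' g' (u b) (hker b hb) := rfl

lemma SubQuot.hom_ext {f : A →+ B} {g : B →+ C} {φ ψ : SubQuot f g →+ D}
    (h : ∀ b hb, φ (SubQuot.mk f g b hb) = ψ (SubQuot.mk f g b hb)) : φ = ψ := by
  ext x
  rcases SubQuot.mk_surjective f g x with ⟨b, hb, rfl⟩
  exact h b hb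

/-- lifting a map annihilating the image out of the subquotient. -/
def SubQuot.lift (f : A →+ B) (g : B →+ C) (ψ : B →+ D) (h : ∀ a : A, ψ (f a) = 0) :
    SubQuot f g →+ D := by
  refine QuotientAddGroup.lift _ (ψ.comp g.ker.subtype) ?_
  intro x hx
  rcases (AddSubgroup.mem_addSubgroupOf).mp hx with ⟨a, ha⟩
  simpa [← ha] using h a

@[simp] lemma SubQuot.lift_mk (f : A →+ B) (g : B →+ C) (ψ : B →+ D)
    (h : ∀ a : A, ψ (f a) = 0) (b : B) (hb : g b = 0) :
    SubQuot.lift f g ψ h (SubQuot.mk f g b hb) = ψ b := rfl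

end SubQuot


def AddMonoidHom.pi' {ι : Type} {β : ι → Type} [∀ i, AddZeroClass (β i)]
    {M : Type} [AddZeroClass M] (f : ∀ i, M →+ β i) : M →+ ∀ i, β i where
  toFun m i := f i m
  map_zero' := by funext i; simp
  map_add' a b := by funext i; simp
structure InvSys (B : Type) [Preorder B] : Type 1 where
  obj : B → Type
  grp : ∀ b, AddCommGroup (obj b)
  map : ∀ {i j : B}, i ≤ j → (obj j →+ obj i)
  map_refl : ∀ i : B, map (le_refl i) = AddMonoidHom.id (obj i)
  map_trans : ∀ {i j k : B} (hij : i ≤ j) (hjk : j ≤ k),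
    (map hij).comp (map hjk) = map (hij.trans hjk)
attribute [instance] InvSys.grp
abbrev Chain (B : Type) [Preorder B] (n : ℕ) : Type := Fin (n+1) →o B
def Chain.face {B : Type} [Preorder B] {n : ℕ} (c : Chain B (n+1)) (k : Fin (n+2)) :
    Chain B n := c.comp (Fin.succAboveOrderEmb k).toOrderHom
lemma Chain.face_succ_zero {B : Type} [Preorder B] {n : ℕ} (c : Chain B (n+1))
    (k : Fin (n+1)) : (Chain.face c k.succ) 0 = c 0 :=
  congrArg c (Fin.succ_succAbove_zero k)
namespace InvSys
variable {B : Type} [Preorder B] (S : InvSys B)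
def limSub : AddSubgroup (∀ b, S.obj b) where
  carrier := {x | ∀ (i j : B) (h : i ≤ j), S.map h (x j) = x i}
  add_mem' := by intro a b ha hb i j h; simp [ha i j h, hb i j h]
  zero_mem' := by intro i j h; simp
  neg_mem' := by intro a ha i j h; simp [ha i j h]
def lim : Type := S.limSub
instance : AddCommGroup S.lim := inferInstanceAs (AddCommGroup S.limSub)
def eqHom {i j : B} (h : i = j) : S.obj j →+ S.obj i := S.map h.le
def C (n : ℕ) : Type := ∀ c : Chain B n, S.obj (c 0)
instance (n : ℕ) : AddCommGroup (S.C n) := Pi.addCommGroup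
def evalC (n : ℕ) (c : Chain B n) : S.C n →+ S.obj (c 0) := Pi.evalAddMonoidHom _ c
def d (n : ℕ) : S.C n →+ S.C (n+1) :=
  AddMonoidHom.pi' fun c : Chain B (n+1) =>
    (S.map (c.monotone (Fin.zero_le _))).comp (S.evalC n (Chain.face c 0))
      + ∑ k : Fin (n+1),
          (-1 : ℤ) ^ ((k : ℕ) + 1) •
            (S.eqHom (Chain.face_succ_zero c k).symm).comp (S.evalC n (Chain.face c k.succ))
lemma d_apply (n : ℕ) (x : S.C n) (c : Chain B (n+1)) :
    S.d n x c =
      S.map (c.monotone (Fin.zero_le _)) (x (Chain.face c 0))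
        + ∑ k : Fin (n+1),
            (-1 : ℤ) ^ ((k : ℕ) + 1) •
              S.eqHom (Chain.face_succ_zero c k).symm (x (Chain.face c k.succ)) := by
  show ((S.map (c.monotone (Fin.zero_le _))).comp (S.evalC n (Chain.face c 0))
      + ∑ k : Fin (n+1),
          (-1 : ℤ) ^ ((k : ℕ) + 1) •
            (S.eqHom (Chain.face_succ_zero c k).symm).comp (S.evalC n (Chain.face c k.succ))) x = _
  rw [AddMonoidHom.add_apply, AddMonoidHom.finset_sum_apply]
  rfl
def limD (k : ℕ) : Type := SubQuot (S.d k) (S.d (k+1))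
instance (k : ℕ) : AddCommGroup (S.limD k) := inferInstanceAs (AddCommGroup (SubQuot _ _))
abbrev lim1 : Type := S.limD 0
end InvSys

/-! ## Morphisms of inverse systems over a monotone reindexing -/

/-- A morphism from an inverse system `T` over `B₂` to an inverse system `S` over `B₁`,
covering a monotone map of index sets `B₁ → B₂`.  It induces maps
`lim T →+ lim S` and `limᵏ T →+ limᵏ S`. -/
structure HomOver {B₁ B₂ : Type} [Preorder B₁] [Preorder B₂]
    (T : InvSys B₂) (S : InvSys B₁) : Type 1 where
  idx : B₁ →o B₂
  app : ∀ b : B₁, T.obj (idx b) →+ S.obj b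
  natural : ∀ {i j : B₁} (h : i ≤ j),
    (app i).comp (T.map (idx.monotone h)) = (S.map h).comp (app j)

namespace HomOver

variable {B₁ B₂ : Type} [Preorder B₁] [Preorder B₂] {T : InvSys B₂} {S : InvSys B₁}
variable (φ : HomOver T S)

lemma natural_apply {i j : B₁} (h : i ≤ j) (hle : φ.idx i ≤ φ.idx j) (y : T.obj (φ.idx j)) :
    φ.app i (T.map hle y) = S.map h (φ.app j y) :=
  DFunLike.congr_fun (φ.natural h) y

/-- the induced map on inverse limits. -/
def limMap : T.lim →+ S.lim :=
  (AddMonoidHom.pi' fun b : B₁ =>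
      (φ.app b).comp ((Pi.evalAddMonoidHom _ (φ.idx b)).comp T.limSub.subtype)).codRestrict
    S.limSub (by
      intro x i j h
      show S.map h (φ.app j (x.1 (φ.idx j))) = φ.app i (x.1 (φ.idx i))
      rw [← φ.natural_apply h (φ.idx.monotone h)]
      exact congrArg (φ.app i) (x.2 _ _ (φ.idx.monotone h)))

lemma limMap_apply (x : T.lim) (b : B₁) :
    (φ.limMap x).1 b = φ.app b (x.1 (φ.idx b)) := rfl

/-- the induced map on Roos cochains. -/
def Cmap (n : ℕ) : T.C n →+ S.C n :=
  AddMonoidHom.pi' fun c : Chain B₁ n => (φ.app (c 0)).comp (T.evalC n (φ.idx.comp c))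

lemma Cmap_apply (n : ℕ) (x : T.C n) (c : Chain B₁ n) :
    φ.Cmap n x c = φ.app (c 0) (x (φ.idx.comp c)) := rfl

lemma Cmap_d_apply (n : ℕ) (x : T.C n) (c : Chain B₁ (n+1)) :
    φ.Cmap (n+1) (T.d n x) c = S.d n (φ.Cmap n x) c := by
  show φ.app (c 0) (T.d n x (φ.idx.comp c)) = _
  rw [T.d_apply, S.d_apply]
  erw [map_add, map_sum]
  congr 1
  · exact φ.natural_apply (c.monotone (Fin.zero_le _)) _ _
  · refine Finset.sum_congr rfl fun k _ => ?_
    refine (map_zsmul (φ.app (c 0)) _ _).trans ?_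
    congr 1
    exact φ.natural_apply (Chain.face_succ_zero c k).symm.le _ _

/-- the induced map on derived limits `limᵏ⁺¹`. -/
def limDMap (k : ℕ) : T.limD k →+ S.limD k :=
  SubQuot.map (φ.Cmap (k+1))
    (fun b hb => by
      funext c
      rw [← φ.Cmap_d_apply, hb]
      exact congrFun (map_zero (φ.Cmap (k+1+1))) c)
    (fun a => ⟨φ.Cmap k a, by
      funext c
      exact (φ.Cmap_d_apply k a c).symm⟩)

end HomOver




/-! ## Pairs of topological spaces -/

structure TopPair : Type 1 where
  carrier : Type
  top : TopologicalSpace carrier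
  sub : Set carrier

attribute [instance] TopPair.top

/-- morphisms of pairs: continuous maps sending the subspace into the subspace. -/
structure PairMap (P Q : TopPair) : Type where
  toFun : P.carrier → Q.carrier
  continuous : Continuous toFun
  maps_sub : ∀ x ∈ P.sub, toFun x ∈ Q.sub

namespace PairMap

@[ext] lemma ext {P Q : TopPair} {f g : PairMap P Q} (h : f.toFun = g.toFun) : f = g := by
  cases f; cases g; simpa using h

def id (P : TopPair) : PairMap P P := ⟨_root_.id, continuous_id, fun _ h => h⟩

def comp {P Q R : TopPair} (g : PairMap Q R) (f : PairMap P Q) : PairMap P R :=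
  ⟨g.toFun ∘ f.toFun, g.continuous.comp f.continuous,
    fun x hx => g.maps_sub _ (f.maps_sub x hx)⟩

end PairMap

/-- a space, viewed as a pair with empty subspace. -/
def TopPair.ofSpace (X : Type) [TopologicalSpace X] : TopPair := ⟨X, ‹_›, ∅⟩

/-- the underlying absolute pair `(X, ∅)`. -/
def TopPair.abs (P : TopPair) : TopPair := ⟨P.carrier, P.top, ∅⟩

/-- the subspace, as a pair `(A, ∅)`. -/
def TopPair.subPair (P : TopPair) : TopPair := ⟨↥P.sub, inferInstance, ∅⟩

/-- restriction of a pair `(X, A)` to a subset `S ⊆ X`, i.e. the pair `(S, S ∩ A)`. -/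
def TopPair.restrict (P : TopPair) (S : Set P.carrier) : TopPair :=
  ⟨↥S, inferInstance, Subtype.val ⁻¹' P.sub⟩

/-- inclusion `(X, ∅) → (X, A)`. -/
def TopPair.inclAbs (P : TopPair) : PairMap P.abs P :=
  ⟨_root_.id, continuous_id, fun x hx => absurd hx (Set.notMem_empty x)⟩

/-- inclusion `(A, ∅) → (X, ∅)`. -/
def TopPair.inclSub (P : TopPair) : PairMap P.subPair P.abs :=
  ⟨fun a => a.1, continuous_subtype_val, fun x hx => absurd hx (Set.notMem_empty x)⟩

/-- inclusion `(S, S ∩ A) → (X, A)`. -/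
def TopPair.inclRestrict (P : TopPair) (S : Set P.carrier) :
    PairMap (P.restrict S) P :=
  ⟨fun a => a.1, continuous_subtype_val, fun _ hx => hx⟩

/-- inclusion `(S, S ∩ A) → (S', S' ∩ A)` for `S ⊆ S'`. -/
def TopPair.inclRestrict₂ (P : TopPair) {S S' : Set P.carrier} (h : S ⊆ S') :
    PairMap (P.restrict S) (P.restrict S') :=
  ⟨Set.inclusion h, continuous_inclusion h, fun x hx => hx⟩

/-- a continuous map, as a map of pairs with empty subspaces. -/
def PairMap.ofContinuous {X Y : Type} [TopologicalSpace X] [TopologicalSpace Y]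
    (f : X → Y) (hf : Continuous f) : PairMap (TopPair.ofSpace X) (TopPair.ofSpace Y) :=
  ⟨f, hf, fun x hx => absurd hx (Set.notMem_empty x)⟩

/-- restriction of a map of pairs to a subset and its image. -/
def PairMap.restrictImage {P Q : TopPair} (f : PairMap P Q) (S : Set P.carrier) :
    PairMap (P.restrict S) (Q.restrict (f.toFun '' S)) :=
  ⟨fun a => ⟨f.toFun a.1, ⟨a.1, a.2, rfl⟩⟩,
    Continuous.subtype_mk (f.continuous.comp continuous_subtype_val) _,
    fun x hx => f.maps_sub _ hx⟩

/-- restriction of the map of subspaces. -/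
def PairMap.restrictSub {P Q : TopPair} (f : PairMap P Q) :
    PairMap P.subPair Q.subPair :=
  ⟨fun a => ⟨f.toFun a.1, f.maps_sub _ a.2⟩,
    Continuous.subtype_mk (f.continuous.comp continuous_subtype_val) _,
    fun x hx => absurd hx (Set.notMem_empty x)⟩

/-- Homotopy of maps of pairs. -/
def PairHomotopic {P Q : TopPair} (f g : PairMap P Q) : Prop :=
  ∃ F : P.carrier × unitInterval → Q.carrier, Continuous F ∧
    (∀ x, F (x, 0) = f.toFun x) ∧ (∀ x, F (x, 1) = g.toFun x) ∧
    (∀ x ∈ P.sub, ∀ t, F (x, t) ∈ Q.sub)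

/-- a one-point pair. -/
def TopPair.IsOnePoint (P : TopPair) : Prop :=
  (∃ x : P.carrier, ∀ y : P.carrier, y = x) ∧ P.sub = ∅


/-! ## Cohomological sequences -/

structure CohSeq : Type 1 where
  H : ℤ → TopPair → Type
  grp : ∀ n P, AddCommGroup (H n P)
  map : ∀ (n : ℤ) {P Q : TopPair}, PairMap P Q → (H n Q →+ H n P)
  map_id : ∀ (n : ℤ) (P : TopPair), map n (PairMap.id P) = AddMonoidHom.id (H n P)
  map_comp : ∀ (n : ℤ) {P Q R : TopPair} (f : PairMap P Q) (g : PairMap Q R),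
    map n (g.comp f) = (map n f).comp (map n g)

attribute [instance] CohSeq.grp

namespace CohSeq

variable (T : CohSeq)

/-- The index set of compact subspaces of (the total space of) a pair. -/
abbrev CptIdx (P : TopPair) : Type := {F : Set P.carrier // IsCompact F}

/-- The inverse system `F ↦ Hⁿ(F, F ∩ A)` over the compact subspaces of `X`,
with maps induced by inclusions. -/
def cptSys (n : ℤ) (P : TopPair) : InvSys (CptIdx P) where
  obj F := T.H n (P.restrict F.1)
  grp F := T.grp n _
  map {F F'} h := T.map n (P.inclRestrict₂ h)
  map_refl F := by
    show T.map n (P.inclRestrict₂ (subset_refl F.1)) = _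
    rw [show P.inclRestrict₂ (subset_refl F.1) = PairMap.id (P.restrict F.1) from
      PairMap.ext rfl]
    exact T.map_id n _
  map_trans {F F' F''} h h' := by
    show (T.map n (P.inclRestrict₂ h)).comp (T.map n (P.inclRestrict₂ h')) =
      T.map n (P.inclRestrict₂ (Set.Subset.trans h h'))
    rw [← T.map_comp]
    exact congrArg (T.map n) (PairMap.ext rfl)

end CohSeq


/-! ## Cohomology theories in the Eilenberg-Steenrod sense -/

/-- A cohomological sequence: a `CohSeq` together with natural connecting
homomorphisms `δ : Hⁿ(A) → Hⁿ⁺¹(X, A)`. -/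
structure CohTheory : Type 1 extends CohSeq where
  δ : ∀ (n : ℤ) (P : TopPair), H n P.subPair →+ H (n+1) P
  δ_natural : ∀ (n : ℤ) {P Q : TopPair} (f : PairMap P Q),
    (δ n P).comp (map n f.restrictSub) = (map (n+1) f).comp (δ n Q)

namespace CohTheory

variable (T : CohTheory)

/-- exactness of the long exact sequence of the pair `P = (X, A)`:
`⋯ → Hⁿ(X,A) → Hⁿ(X) → Hⁿ(A) → Hⁿ⁺¹(X,A) → ⋯`. -/
def ExactSeq (P : TopPair) : Prop :=
  ∀ n : ℤ,
    (T.map n P.inclAbs).range = (T.map n P.inclSub).ker ∧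
    (T.map n P.inclSub).range = (T.δ n P).ker ∧
    (T.δ n P).range = (T.map (n+1) P.inclAbs).ker

/-- The homotopy axiom on the subcategory of pairs satisfying `Obj`. -/
def HomotopyAxiom (Obj : TopPair → Prop) : Prop :=
  ∀ {P Q : TopPair}, Obj P → Obj Q → ∀ (f g : PairMap P Q), PairHomotopic f g →
    ∀ n : ℤ, T.map n f = T.map n g

/-- The excision axiom on the subcategory of pairs satisfying `Obj`. -/
def ExcisionAxiom (Obj : TopPair → Prop) : Prop :=
  ∀ (P : TopPair), Obj P → ∀ U : Set P.carrier, closure U ⊆ interior P.sub →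
    Obj (P.restrict Uᶜ) →
    ∀ n : ℤ, Function.Bijective (T.map n (P.inclRestrict Uᶜ))

/-- The exactness axiom on the subcategory of pairs satisfying `Obj`. -/
def ExactnessAxiom (Obj : TopPair → Prop) : Prop :=
  ∀ P : TopPair, Obj P → T.ExactSeq P

/-- The dimension axiom on the subcategory of pairs satisfying `Obj`. -/
def DimensionAxiom (Obj : TopPair → Prop) : Prop :=
  ∀ P : TopPair, Obj P → P.IsOnePoint → ∀ n : ℤ, n ≠ 0 → Subsingleton (T.H n P)

/-- A cohomology theory in the Eilenberg-Steenrod sense on the subcategory of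
pairs satisfying `Obj`. -/
def IsES (Obj : TopPair → Prop) : Prop :=
  T.HomotopyAxiom Obj ∧ T.ExcisionAxiom Obj ∧ T.ExactnessAxiom Obj ∧ T.DimensionAxiom Obj

/-- Milnor's additivity axiom on the subcategory of pairs satisfying `Obj`:
if a space `X` of the category is the disjoint union of open subspaces `X_α`, all
belonging to the category, then the inclusions represent `Hⁿ(X)` as the direct
product of the `Hⁿ(X_α)`. -/
def AdditivityAxiom (Obj : TopPair → Prop) : Prop :=
  ∀ (P : TopPair), Obj P → P.sub = ∅ →
    ∀ {ι : Type} (U : ι → Set P.carrier),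
      (∀ α, IsOpen (U α)) → (Pairwise (Function.onFun Disjoint U)) →
      (⋃ α, U α) = Set.univ → (∀ α, Obj (P.restrict (U α))) →
      ∀ n : ℤ, Function.Bijective
        (fun (x : T.H n P) (α : ι) => T.map n (P.inclRestrict (U α)) x)

end CohTheory


/-! ## Compact supports machinery for cohomological sequences -/

namespace CohSeq

variable (T : CohSeq)

/-- The canonical comparison map `Hⁿ(X, A) → lim Hⁿ(F, F ∩ A)` over the compact
subspaces `F` of `X`, given by restrictions. -/
def toCptLim (n : ℤ) (P : TopPair) : T.H n P →+ (T.cptSys n P).lim :=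
  (AddMonoidHom.pi' fun F : CptIdx P => T.map n (P.inclRestrict F.1)).codRestrict
    (T.cptSys n P).limSub (by
      intro x F F' h
      show T.map n (P.inclRestrict₂ h) (T.map n (P.inclRestrict F'.1) x)
        = T.map n (P.inclRestrict F.1) x
      rw [← AddMonoidHom.comp_apply, ← T.map_comp]
      exact congrFun (congrArg _ (congrArg (T.map n) (PairMap.ext rfl))) x)

/-- The morphism of compact-supports inverse systems induced by a map of pairs. -/
def cptHomOver (n : ℤ) {P Q : TopPair} (f : PairMap P Q) :
    HomOver (T.cptSys n Q) (T.cptSys n P) where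
  idx := ⟨fun F => ⟨f.toFun '' F.1, F.2.image f.continuous⟩,
    fun _ _ h => Set.image_mono h⟩
  app F := T.map n (f.restrictImage F.1)
  natural {i j} h := by
    show (T.map n (f.restrictImage i.1)).comp (T.map n (Q.inclRestrict₂ _))
      = (T.map n (P.inclRestrict₂ h)).comp (T.map n (f.restrictImage j.1))
    rw [← T.map_comp, ← T.map_comp]
    exact congrArg (T.map n) (PairMap.ext rfl)

end CohSeq

/-- Condition (2_NT) of a nontrivial internal extension: the collection of short
exact sequences `0 → lim¹ Hⁿ⁻¹(F_α, E_α) → Hⁿ(X, A) → lim Hⁿ(F_α, E_α) → 0`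
over the direct system of compact pairs `(F_α, E_α = F_α ∩ A)`. -/
structure NTSes (T : CohSeq) (Obj : TopPair → Prop) : Type 1 where
  ofLim1 : ∀ (n : ℤ) (P : TopPair), (T.cptSys (n-1) P).lim1 →+ T.H n P
  toLim : ∀ (n : ℤ) (P : TopPair), T.H n P →+ (T.cptSys n P).lim
  injective : ∀ n P, Obj P → Function.Injective (ofLim1 n P)
  exact : ∀ n P, Obj P → (ofLim1 n P).range = (toLim n P).ker
  surjective : ∀ n P, Obj P → Function.Surjective (toLim n P)

/-- Condition (3_NT): naturality of the short exact sequences of (2_NT) with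
respect to continuous maps of pairs. -/
def NTSes.Natural {T : CohSeq} {Obj : TopPair → Prop} (E : NTSes T Obj) : Prop :=
  ∀ {P Q : TopPair}, Obj P → Obj Q → ∀ (f : PairMap P Q) (n : ℤ),
    (E.toLim n P).comp (T.map n f) = ((T.cptHomOver n f).limMap).comp (E.toLim n Q) ∧
    (E.ofLim1 n P).comp ((T.cptHomOver (n-1) f).limDMap 0) = (T.map n f).comp (E.ofLim1 n Q)

/-! ## Relative CW-complexes (the categorical definition of the older Mathlib) -/

section CWDefs

universe u

open CategoryTheory

namespace RelativeCWComplex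

/-- The `n`-dimensional sphere. -/
noncomputable def sphere (n : ℤ) : TopCat.{u} :=
  TopCat.of <| ULift <| Metric.sphere (0 : EuclideanSpace ℝ <| Fin <| Int.toNat <| n + 1) 1

/-- The `n`-dimensional closed disk. -/
noncomputable def disk (n : ℤ) : TopCat.{u} :=
  TopCat.of <| ULift <| Metric.closedBall (0 : EuclideanSpace ℝ <| Fin <| Int.toNat n) 1

/-- The inclusion map from the `n`-sphere to the `(n + 1)`-disk -/
def sphereInclusion (n : ℤ) : sphere.{u} n ⟶ disk.{u} (n + 1) :=
  TopCat.ofHom ⟨fun p => ULift.up ⟨p.down.1, le_of_eq p.down.2⟩,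
    continuous_uliftUp.comp (Continuous.subtype_mk
      (continuous_subtype_val.comp continuous_uliftDown) _)⟩

/-- the disjoint union of the inclusions of spheres into disks. -/
noncomputable def sigmaSphereInclusion (n : ℤ) (cells : Type u) :
    (∐ fun (_ : cells) => sphere.{u} n) ⟶ (∐ fun (_ : cells) => disk.{u} (n + 1)) :=
  Limits.Sigma.map fun _ => sphereInclusion n

/-- the attaching map of the disjoint union of spheres. -/
noncomputable def sigmaAttachMap (X : TopCat.{u}) (n : ℤ) (cells : Type u)
    (attach_maps : cells → (sphere.{u} n ⟶ X)) : (∐ fun (_ : cells) => sphere.{u} n) ⟶ X :=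
  Limits.Sigma.desc attach_maps

/-- `X'` is obtained from `X` by attaching `(n + 1)`-disks. -/
structure AttachGeneralizedCells (X X' : TopCat.{u}) (n : ℤ) where
  cells : Type u
  attachMaps : cells → (sphere.{u} n ⟶ X)
  iso_pushout : X' ≅ Limits.pushout (sigmaSphereInclusion n cells)
    (sigmaAttachMap X n cells attachMaps)

end RelativeCWComplex

/-- A relative CW-complex. -/
structure RelativeCWComplex (A : TopCat.{u}) where
  sk : ℕ → TopCat.{u}
  iso_sk_zero : A ≅ sk 0
  attachCells (n : ℕ) : RelativeCWComplex.AttachGeneralizedCells (sk n) (sk (n + 1)) (n - 1)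

/-- A CW-complex is a relative CW-complex whose `sk 0` is empty. -/
structure CWComplex extends RelativeCWComplex.{u} (TopCat.of PEmpty) where

namespace RelativeCWComplex

/-- the inclusion `X ⟶ X'`. -/
noncomputable def AttachGeneralizedCells.inclusion {X X' : TopCat.{u}} {n : ℤ}
    (att : AttachGeneralizedCells.{u} X X' n) : X ⟶ X' :=
  Limits.pushout.inr _ _ ≫ (att.iso_pushout).inv

/-- the inclusion of skeleta. -/
noncomputable def skInclusion {A : TopCat.{u}} (X : RelativeCWComplex.{u} A) (n : ℕ) :
    X.sk n ⟶ X.sk (n + 1) :=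
  (X.attachCells n).inclusion

/-- The topological space of a relative CW-complex. -/
noncomputable def toTopCat {A : TopCat.{u}} (X : RelativeCWComplex.{u} A) : TopCat.{u} :=
  Limits.colimit (Functor.ofSequence X.skInclusion)

end RelativeCWComplex

end CWDefs

/-! ## The categories of pairs considered in the paper -/

/-- A space having the homotopy type of a CW complex. -/
def HasCWHomotopyType (X : Type) [TopologicalSpace X] : Prop :=
  ∃ C : CWComplex.{0}, Nonempty (ContinuousMap.HomotopyEquiv X C.toRelativeCWComplex.toTopCat)

/-- The category `K²_CW` of pairs of spaces having the homotopy type of CW complexes. -/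
def IsCWPair (P : TopPair) : Prop :=
  HasCWHomotopyType P.carrier ∧ HasCWHomotopyType ↥P.sub

/-- The category `K²_PolC` of pairs of compact polyhedra: pairs homeomorphic to the pair of
spaces of a finite simplicial complex and a subcomplex. -/
def IsCompactPolyhedralPair (P : TopPair) : Prop :=
  ∃ (N : ℕ) (K L : Geometry.SimplicialComplex ℝ (Fin N → ℝ)),
    K.faces.Finite ∧ L.faces ⊆ K.faces ∧
    ∃ e : P.carrier ≃ₜ ↥K.space, Subtype.val '' (e '' P.sub) = L.space

/-- A polyhedron: a space homeomorphic to the geometric realization of a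
simplicial set. -/
def IsPolyhedron (X : Type) [TopologicalSpace X] : Prop :=
  ∃ K : SSet.{0}, Nonempty (X ≃ₜ ↥(SSet.toTop.obj K))

/-- A polyhedral pair. -/
def IsPolyhedralPair (P : TopPair) : Prop :=
  IsPolyhedron P.carrier ∧ IsPolyhedron ↥P.sub



section SubQuotMore
variable {A B C A' B' C' A'' B'' C'' D : Type}
variable [AddCommGroup A] [AddCommGroup B] [AddCommGroup C]
variable [AddCommGroup A'] [AddCommGroup B'] [AddCommGroup C']
variable [AddCommGroup A''] [AddCommGroup B''] [AddCommGroup C''] [AddCommGroup D]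

/-- lifting a homomorphism defined on cycles out of the subquotient. -/
def SubQuot.lift' (f : A →+ B) (g : B →+ C) (χ : g.ker →+ D)
    (h : ∀ (a : A) (ha : g (f a) = 0), χ ⟨f a, ha⟩ = 0) : SubQuot f g →+ D := by
  refine QuotientAddGroup.lift _ χ ?_
  intro x hx
  rcases (AddSubgroup.mem_addSubgroupOf).mp hx with ⟨a, ha⟩
  have : x = ⟨f a, by rw [ha]; exact AddMonoidHom.mem_ker.mp x.2⟩ := by
    apply Subtype.ext; exact ha.symm
  rw [this]
  exact h a _

@[simp] lemma SubQuot.lift'_mk (f : A →+ B) (g : B →+ C) (χ : g.ker →+ D)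
    (h : ∀ (a : A) (ha : g (f a) = 0), χ ⟨f a, ha⟩ = 0) (b : B) (hb : g b = 0) :
    SubQuot.lift' f g χ h (SubQuot.mk f g b hb) = χ ⟨b, hb⟩ := rfl

end SubQuotMore

/-- precomposition with a fixed homomorphism, as a homomorphism on `Hom`-groups. -/
def precompHom {A B G : Type} [AddCommGroup A] [AddCommGroup B] [AddCommGroup G]
    (f : A →+ B) : (B →+ G) →+ (A →+ G) :=
  AddMonoidHom.mk' (fun φ => φ.comp f) (fun φ ψ => by ext a; simp)

@[simp] lemma precompHom_apply {A B G : Type} [AddCommGroup A] [AddCommGroup B]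
    [AddCommGroup G] (f : A →+ B) (φ : B →+ G) : precompHom f φ = φ.comp f := rfl

/-! ## Singular chains, singular homology and singular cohomology -/

noncomputable section Singular

open CategoryTheory

/-- a continuous map as a morphism in `TopCat`. -/
def toHom {X Y : Type} [TopologicalSpace X] [TopologicalSpace Y] (f : C(X, Y)) :
    TopCat.of X ⟶ TopCat.of Y := TopCat.ofHom f

/-- The set of singular `n`-simplices of `X` (continuous maps from the standard
topological `n`-simplex to `X`, via the singular simplicial set). -/
def Simp (X : Type) [TopologicalSpace X] (n : ℕ) : Type :=
  (TopCat.toSSet.obj (TopCat.of X)).obj (Opposite.op (SimplexCategory.mk n))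

/-- the `i`-th face of a singular simplex. -/
def Simp.face {X : Type} [TopologicalSpace X] {n : ℕ} (i : Fin (n+2)) :
    Simp X (n+1) → Simp X n :=
  (TopCat.toSSet.obj (TopCat.of X)).map (SimplexCategory.δ i).op

/-- the map on singular simplices induced by a continuous map. -/
def mapSimp {X Y : Type} [TopologicalSpace X] [TopologicalSpace Y]
    (f : C(X, Y)) (n : ℕ) : Simp X n → Simp Y n :=
  (TopCat.toSSet.map (toHom f)).app (Opposite.op (SimplexCategory.mk n))

lemma mapSimp_id (X : Type) [TopologicalSpace X] (n : ℕ) (σ : Simp X n) :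
    mapSimp (ContinuousMap.id X) n σ = σ := by
  show (TopCat.toSSet.map (𝟙 (TopCat.of X))).app _ σ = σ
  rw [CategoryTheory.Functor.map_id]
  rfl

lemma mapSimp_comp {X Y Z : Type} [TopologicalSpace X] [TopologicalSpace Y]
    [TopologicalSpace Z] (f : C(X,Y)) (g : C(Y,Z)) (n : ℕ) (σ : Simp X n) :
    mapSimp (g.comp f) n σ = mapSimp g n (mapSimp f n σ) := by
  show (TopCat.toSSet.map (toHom f ≫ toHom g)).app _ σ = _
  rw [CategoryTheory.Functor.map_comp]
  rfl

lemma mapSimp_face {X Y : Type} [TopologicalSpace X] [TopologicalSpace Y] (f : C(X,Y))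
    (n : ℕ) (i : Fin (n+2)) (σ : Simp X (n+1)) :
    mapSimp f n (Simp.face i σ) = Simp.face i (mapSimp f (n+1) σ) :=
  ConcreteCategory.congr_hom ((TopCat.toSSet.map (toHom f)).naturality (SimplexCategory.δ i).op) σ

/-- The group of singular `n`-chains with coefficients in `G`. -/
abbrev SCh (X : Type) [TopologicalSpace X] (G : Type) [AddCommGroup G] (n : ℕ) : Type :=
  Simp X n →₀ G

variable (G : Type) [AddCommGroup G]

/-- The boundary operator of the singular chain complex. -/
def bd (X : Type) [TopologicalSpace X] (n : ℕ) : SCh X G (n+1) →+ SCh X G n :=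
  ∑ i : Fin (n+2),
    (zsmulAddGroupHom ((-1 : ℤ) ^ (i : ℕ))).comp (Finsupp.mapDomain.addMonoidHom (Simp.face i))

/-- The chain map induced by a continuous map. -/
def mapSCh {X Y : Type} [TopologicalSpace X] [TopologicalSpace Y] (f : C(X,Y)) (n : ℕ) :
    SCh X G n →+ SCh Y G n :=
  Finsupp.mapDomain.addMonoidHom (mapSimp f n)

lemma mapSCh_bd {X Y : Type} [TopologicalSpace X] [TopologicalSpace Y] (f : C(X,Y))
    (n : ℕ) (z : SCh X G (n+1)) :
    mapSCh G f n (bd G X n z) = bd G Y n (mapSCh G f (n+1) z) := by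
  have h : (mapSCh G f n).comp (bd G X n) = (bd G Y n).comp (mapSCh G f (n+1)) := by
    refine Finsupp.addHom_ext fun σ g => ?_
    have hap : ∀ (α β : Type) (u : α → β) (v : α →₀ G),
        Finsupp.mapDomain.addMonoidHom u v = Finsupp.mapDomain u v := fun _ _ _ _ => rfl
    simp only [mapSCh, bd, AddMonoidHom.comp_apply, AddMonoidHom.finset_sum_apply, map_sum,
      zsmulAddGroupHom_apply, map_zsmul]
    refine Finset.sum_congr rfl fun i _ => ?_
    simp only [hap, Finsupp.mapDomain_single, mapSimp_face]
  exact DFunLike.congr_fun h z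

lemma mapSCh_id (X : Type) [TopologicalSpace X] (n : ℕ) (z : SCh X G n) :
    mapSCh G (ContinuousMap.id X) n z = z := by
  have : mapSimp (ContinuousMap.id X) n = _root_.id := funext (mapSimp_id X n)
  show Finsupp.mapDomain _ z = z
  rw [this, Finsupp.mapDomain_id]

lemma mapSCh_comp {X Y Z : Type} [TopologicalSpace X] [TopologicalSpace Y]
    [TopologicalSpace Z] (f : C(X,Y)) (g : C(Y,Z)) (n : ℕ) (z : SCh X G n) :
    mapSCh G (g.comp f) n z = mapSCh G g n (mapSCh G f n z) := by
  have : mapSimp (g.comp f) n = mapSimp g n ∘ mapSimp f n := funext (mapSimp_comp f g n)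
  show Finsupp.mapDomain _ z = Finsupp.mapDomain _ (Finsupp.mapDomain _ z)
  rw [this, Finsupp.mapDomain_comp]

/-! ### Singular homology -/

/-- target of the outgoing boundary map (`0` in degree `0`). -/
def ChPrev (X : Type) [TopologicalSpace X] (G : Type) [AddCommGroup G] : ℕ → Type
  | 0 => PUnit
  | (n+1) => SCh X G n

instance (X : Type) [TopologicalSpace X] (G : Type) [AddCommGroup G] :
    ∀ n, AddCommGroup (ChPrev X G n)
  | 0 => inferInstanceAs (AddCommGroup PUnit)
  | (_+1) => inferInstanceAs (AddCommGroup (SCh _ _ _))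

/-- the outgoing boundary map `∂ : C_n → C_{n-1}` (zero in degree `0`). -/
def bdOut (X : Type) [TopologicalSpace X] : ∀ n, SCh X G n →+ ChPrev X G n
  | 0 => 0
  | (n+1) => bd G X n

/-- The `n`-th singular homology group of `X` with coefficients in `G`. -/
def SHomo (X : Type) [TopologicalSpace X] (n : ℕ) : Type :=
  SubQuot (bd G X n) (bdOut G X n)

instance (X : Type) [TopologicalSpace X] (n : ℕ) : AddCommGroup (SHomo G X n) :=
  inferInstanceAs (AddCommGroup (SubQuot _ _))

lemma bdOut_mapSCh {X Y : Type} [TopologicalSpace X] [TopologicalSpace Y]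
    (f : C(X,Y)) (n : ℕ) (b : SCh X G n) (hb : bdOut G X n b = 0) :
    bdOut G Y n (mapSCh G f n b) = 0 := by
  cases n with
  | zero => rfl
  | succ m =>
      show bd G Y m (mapSCh G f (m+1) b) = 0
      rw [← mapSCh_bd, show bd G X m b = 0 from hb, map_zero]

/-- The map on singular homology induced by a continuous map. -/
def SHomoMap {X Y : Type} [TopologicalSpace X] [TopologicalSpace Y]
    (f : C(X,Y)) (n : ℕ) : SHomo G X n →+ SHomo G Y n :=
  SubQuot.map (mapSCh G f n) (bdOut_mapSCh G f n)
    (fun a => ⟨mapSCh G f (n+1) a, (mapSCh_bd G f n a).symm⟩)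

lemma SHomoMap_mk {X Y : Type} [TopologicalSpace X] [TopologicalSpace Y]
    (f : C(X,Y)) (n : ℕ) (b : SCh X G n) (hb : bdOut G X n b = 0) :
    SHomoMap G f n (SubQuot.mk _ _ b hb) =
      SubQuot.mk _ _ (mapSCh G f n b) (bdOut_mapSCh G f n b hb) := rfl

lemma SHomoMap_id (X : Type) [TopologicalSpace X] (n : ℕ) :
    SHomoMap G (ContinuousMap.id X) n = AddMonoidHom.id (SHomo G X n) := by
  refine SubQuot.hom_ext fun b hb => ?_
  show SubQuot.mk _ _ (mapSCh G (ContinuousMap.id X) n b)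
    (bdOut_mapSCh G (ContinuousMap.id X) n b hb) = SubQuot.mk _ _ b hb
  exact SubQuot.mk_congr _ _ (mapSCh_id G X n b) _ _

lemma SHomoMap_comp {X Y Z : Type} [TopologicalSpace X] [TopologicalSpace Y]
    [TopologicalSpace Z] (f : C(X,Y)) (g : C(Y,Z)) (n : ℕ) :
    (SHomoMap G g n).comp (SHomoMap G f n) = SHomoMap G (g.comp f) n := by
  refine SubQuot.hom_ext fun b hb => ?_
  show SubQuot.mk _ _ (mapSCh G g n (mapSCh G f n b)) (bdOut_mapSCh G g n _
      (bdOut_mapSCh G f n b hb)) =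
    SubQuot.mk _ _ (mapSCh G (g.comp f) n b) (bdOut_mapSCh G (g.comp f) n b hb)
  exact SubQuot.mk_congr _ _ (mapSCh_comp G f g n b).symm _ _

/-! ### Singular cohomology -/

variable (X : Type) [TopologicalSpace X]

/-- Singular `n`-cochains of `X` with values in `G`. -/
abbrev Co (n : ℕ) : Type := SCh X ℤ n →+ G

/-- the coboundary. -/
def cobd (n : ℕ) : Co G X n →+ Co G X (n+1) := precompHom (bd ℤ X n)

/-- source of the incoming coboundary map (`0` in degree `0`). -/
def CoPrev : ℕ → Type
  | 0 => PUnit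
  | (n+1) => Co G X n

instance : ∀ n, AddCommGroup (CoPrev G X n)
  | 0 => inferInstanceAs (AddCommGroup PUnit)
  | (_+1) => inferInstanceAs (AddCommGroup (Co _ _ _))

/-- the incoming coboundary map (zero into degree `0`). -/
def cobdFrom : ∀ n, CoPrev G X n →+ Co G X n
  | 0 => 0
  | (n+1) => cobd G X n

/-- The `n`-th singular cohomology group of `X` with coefficients in `G`. -/
def SCoho (n : ℕ) : Type := SubQuot (cobdFrom G X n) (cobd G X n)

instance (n : ℕ) : AddCommGroup (SCoho G X n) := inferInstanceAs (AddCommGroup (SubQuot _ _))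

variable {X}

lemma cobd_precomp {Y : Type} [TopologicalSpace Y] (f : C(X,Y)) (n : ℕ) (φ : Co G Y n) :
    cobd G X n (φ.comp (mapSCh ℤ f n)) = (cobd G Y n φ).comp (mapSCh ℤ f (n+1)) := by
  refine AddMonoidHom.ext fun z => ?_
  show φ (mapSCh ℤ f n (bd ℤ X n z)) = φ (bd ℤ Y n (mapSCh ℤ f (n+1) z))
  rw [mapSCh_bd]

lemma cobd_mapCo {Y : Type} [TopologicalSpace Y] (f : C(X,Y)) (n : ℕ) (φ : Co G Y n)
    (hφ : cobd G Y n φ = 0) : cobd G X n (precompHom (mapSCh ℤ f n) φ) = 0 := by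
  rw [precompHom_apply, cobd_precomp, hφ]
  rfl

lemma cobdFrom_mapCo {Y : Type} [TopologicalSpace Y] (f : C(X,Y)) (n : ℕ)
    (a : CoPrev G Y n) :
    ∃ a' : CoPrev G X n, cobdFrom G X n a' = precompHom (mapSCh ℤ f n) (cobdFrom G Y n a) := by
  cases n with
  | zero => exact ⟨PUnit.unit, by show (0 : Co G X 0) = _; rw [show cobdFrom G Y 0 a = 0 from rfl, map_zero]⟩
  | succ m =>
      refine ⟨precompHom (mapSCh ℤ f m) a, ?_⟩
      show cobd G X m (a.comp (mapSCh ℤ f m)) = (cobd G Y m a).comp (mapSCh ℤ f (m+1))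
      exact cobd_precomp G f m a

/-- The map on singular cohomology induced by a continuous map. -/
def SCohoMap {Y : Type} [TopologicalSpace Y] (f : C(X,Y)) (n : ℕ) :
    SCoho G Y n →+ SCoho G X n :=
  SubQuot.map (precompHom (mapSCh ℤ f n)) (fun φ hφ => cobd_mapCo G f n φ hφ)
    (cobdFrom_mapCo G f n)

lemma SCohoMap_mk {Y : Type} [TopologicalSpace Y] (f : C(X,Y)) (n : ℕ)
    (φ : Co G Y n) (hφ : cobd G Y n φ = 0) :
    SCohoMap G f n (SubQuot.mk _ _ φ hφ) =
      SubQuot.mk _ _ (φ.comp (mapSCh ℤ f n)) (cobd_mapCo G f n φ hφ) := rfl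

lemma SCohoMap_id (n : ℕ) : SCohoMap G (ContinuousMap.id X) n = AddMonoidHom.id (SCoho G X n) := by
  refine SubQuot.hom_ext fun φ hφ => ?_
  show SubQuot.mk _ _ (φ.comp (mapSCh ℤ (ContinuousMap.id X) n))
    (cobd_mapCo G (ContinuousMap.id X) n φ hφ) = SubQuot.mk _ _ φ hφ
  refine SubQuot.mk_congr _ _ ?_ _ _
  refine AddMonoidHom.ext fun z => ?_
  show φ (mapSCh ℤ (ContinuousMap.id X) n z) = φ z
  rw [mapSCh_id]

lemma SCohoMap_comp {Y Z : Type} [TopologicalSpace Y] [TopologicalSpace Z]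
    (f : C(X,Y)) (g : C(Y,Z)) (n : ℕ) :
    (SCohoMap G f n).comp (SCohoMap G g n) = SCohoMap G (g.comp f) n := by
  refine SubQuot.hom_ext fun φ hφ => ?_
  show SubQuot.mk _ _ ((φ.comp (mapSCh ℤ g n)).comp (mapSCh ℤ f n))
      (cobd_mapCo G f n _ (cobd_mapCo G g n φ hφ)) =
    SubQuot.mk _ _ (φ.comp (mapSCh ℤ (g.comp f) n)) (cobd_mapCo G (g.comp f) n φ hφ)
  refine SubQuot.mk_congr _ _ ?_ _ _
  refine AddMonoidHom.ext fun z => ?_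
  show φ (mapSCh ℤ g n (mapSCh ℤ f n z)) = φ (mapSCh ℤ (g.comp f) n z)
  rw [mapSCh_comp]

/-! ### The evaluation map `Hⁿ(X;G) → Hom(Hₙ(X), G)` -/

/-- Evaluation of a cohomology class on a homology class. -/
def evalSCoho (n : ℕ) : SCoho G X n →+ (SHomo ℤ X n →+ G) := by
  refine SubQuot.lift' (cobdFrom G X n) (cobd G X n)
    (AddMonoidHom.mk' (fun φ => SubQuot.lift' (bd ℤ X n) (bdOut ℤ X n)
      (φ.1.comp (bdOut ℤ X n).ker.subtype)
      (fun a _ => by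
        have : cobd G X n φ.1 = 0 := AddMonoidHom.mem_ker.mp φ.2
        show φ.1 (bd ℤ X n a) = 0
        exact DFunLike.congr_fun this a)) ?_) ?_
  · intro φ ψ
    refine SubQuot.hom_ext fun b hb => ?_
    rfl
  · intro a ha
    refine SubQuot.hom_ext fun b hb => ?_
    show cobdFrom G X n a (b) = 0
    cases n with
    | zero => show (0 : Co G X 0) b = 0; rfl
    | succ m =>
        have hb' : bd ℤ X m b = 0 := hb
        show (show SCh X ℤ m →+ G from a) (bd ℤ X m b) = 0
        rw [hb', map_zero]

end Singular



/-! ## Direct systems of abelian groups and their `Hom`-inverse systems -/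

structure DirSys (B : Type) [Preorder B] : Type 1 where
  obj : B → Type
  grp : ∀ b, AddCommGroup (obj b)
  map : ∀ {i j : B}, i ≤ j → (obj i →+ obj j)
  map_refl : ∀ i : B, map (le_refl i) = AddMonoidHom.id (obj i)
  map_trans : ∀ {i j k : B} (hij : i ≤ j) (hjk : j ≤ k),
    (map hjk).comp (map hij) = map (hij.trans hjk)

attribute [instance] DirSys.grp

/-- The inverse system `b ↦ Hom(A_b, G)` associated with a direct system `{A_b}`. -/
def DirSys.homSys {B : Type} [Preorder B] (D : DirSys B) (G : Type) [AddCommGroup G] :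
    InvSys B where
  obj b := D.obj b →+ G
  grp _ := inferInstance
  map {i j} h := precompHom (D.map h)
  map_refl i := by
    refine AddMonoidHom.ext fun φ => ?_
    show φ.comp (D.map (le_refl i)) = φ
    rw [D.map_refl]
    exact AddMonoidHom.comp_id φ
  map_trans {i j k} hij hjk := by
    refine AddMonoidHom.ext fun φ => ?_
    show (φ.comp (D.map hjk)).comp (D.map hij) = φ.comp (D.map (hij.trans hjk))
    rw [AddMonoidHom.comp_assoc, D.map_trans]

/-! ## Inverse systems of singular (co)homology over compact subspaces -/

/-- inclusion of subspaces as a continuous map. -/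
def inclC {X : Type} [TopologicalSpace X] {S S' : Set X} (h : S ⊆ S') : C(↥S, ↥S') :=
  ⟨Set.inclusion h, continuous_inclusion h⟩

/-- inclusion of a subspace into the ambient space. -/
def inclX {X : Type} [TopologicalSpace X] (S : Set X) : C(↥S, X) :=
  ⟨Subtype.val, continuous_subtype_val⟩

/-- The directed set of compact subspaces of `X`, ordered by inclusion. -/
abbrev CptSub (X : Type) [TopologicalSpace X] : Type := {F : Set X // IsCompact F}

noncomputable section SingularSystems

variable (G : Type) [AddCommGroup G] (X : Type) [TopologicalSpace X]

/-- The inverse system of the singular cohomology groups `Hⁿ_s(F; G)` of the compact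
subspaces of `X`. -/
def singCohCptSys (n : ℕ) : InvSys (CptSub X) where
  obj F := SCoho G ↥F.1 n
  grp _ := inferInstance
  map {F F'} h := SCohoMap G (inclC h) n
  map_refl F := by
    show SCohoMap G (inclC (subset_refl F.1)) n = _
    rw [show inclC (subset_refl F.1) = ContinuousMap.id ↥F.1 from rfl]
    exact SCohoMap_id G n
  map_trans {F F' F''} h h' := by
    show (SCohoMap G (inclC h) n).comp (SCohoMap G (inclC h') n) = _
    rw [SCohoMap_comp]
    rfl

/-- The canonical comparison map `Hⁿ_s(X;G) → lim Hⁿ_s(F;G)` over the compact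
subspaces `F ⊆ X`, given by restrictions. -/
def singToCptLim (n : ℕ) : SCoho G X n →+ (singCohCptSys G X n).lim :=
  (AddMonoidHom.pi' fun F : CptSub X => SCohoMap G (inclX F.1) n).codRestrict
    (singCohCptSys G X n).limSub (by
      intro x F F' h
      show SCohoMap G (inclC h) n (SCohoMap G (inclX F'.1) n x) = SCohoMap G (inclX F.1) n x
      rw [← AddMonoidHom.comp_apply, SCohoMap_comp]
      rfl)

/-- The direct system of the singular homology groups of the compact subspaces of `X`. -/
def singHomoCptSys (n : ℕ) : DirSys (CptSub X) where
  obj F := SHomo G ↥F.1 n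
  grp _ := inferInstance
  map {F F'} h := SHomoMap G (inclC h) n
  map_refl F := by
    show SHomoMap G (inclC (subset_refl F.1)) n = _
    rw [show inclC (subset_refl F.1) = ContinuousMap.id ↥F.1 from rfl]
    exact SHomoMap_id G _ n
  map_trans {F F' F''} h h' := by
    show (SHomoMap G (inclC h') n).comp (SHomoMap G (inclC h) n) = _
    rw [SHomoMap_comp]
    rfl

end SingularSystems


/-! ## A concrete model of `Ext(A, G)` for abelian groups -/

section Ext

variable (A B C' G : Type) [AddCommGroup A] [AddCommGroup B] [AddCommGroup C']
  [AddCommGroup G]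

/-- the canonical surjection from the free abelian group on `A` onto `A`. -/
def freeLift : FreeAbelianGroup A →+ A := FreeAbelianGroup.lift id

/-- `Ext(A, G)`, computed from the free resolution
`0 → K → ℤ[A] → A → 0` with `K = ker(ℤ[A] → A)`:
it is the cokernel of `Hom(ℤ[A], G) → Hom(K, G)`. -/
def ExtG : Type :=
  SubQuot (precompHom ((freeLift A).ker.subtype) : (FreeAbelianGroup A →+ G) →+ _)
    (0 : ((freeLift A).ker →+ G) →+ PUnit)

instance : AddCommGroup (ExtG A G) := inferInstanceAs (AddCommGroup (SubQuot _ _))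

variable {A B C'}

lemma freeLift_naturality (f : A →+ B) :
    (freeLift B).comp (FreeAbelianGroup.map f) = f.comp (freeLift A) := by
  refine FreeAbelianGroup.lift_ext _ _ fun x => ?_
  show freeLift B (FreeAbelianGroup.map f (FreeAbelianGroup.of x))
    = f (freeLift A (FreeAbelianGroup.of x))
  rw [FreeAbelianGroup.map_of_apply]
  show FreeAbelianGroup.lift id _ = f (FreeAbelianGroup.lift id _)
  rw [FreeAbelianGroup.lift_apply_of, FreeAbelianGroup.lift_apply_of]
  rfl

/-- the induced map on the kernels of the free resolutions. -/
def extKerMap (f : A →+ B) : (freeLift A).ker →+ (freeLift B).ker :=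
  ((FreeAbelianGroup.map f).comp (freeLift A).ker.subtype).codRestrict _ (fun x => by
    have h := DFunLike.congr_fun (freeLift_naturality f) x.1
    refine AddMonoidHom.mem_ker.mpr ?_
    show freeLift B (FreeAbelianGroup.map f x.1) = 0
    rw [show freeLift B (FreeAbelianGroup.map f x.1)
        = f (freeLift A x.1) from h, AddMonoidHom.mem_ker.mp x.2, map_zero])

/-- contravariant functoriality of `Ext(-, G)`. -/
def ExtG.map (f : A →+ B) : ExtG B G →+ ExtG A G :=
  SubQuot.map (precompHom (extKerMap f)) (fun _ _ => rfl)
    (fun ψ => ⟨ψ.comp (FreeAbelianGroup.map f), by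
      refine AddMonoidHom.ext fun x => ?_
      rfl⟩)

lemma ExtG.map_apply_mk (f : A →+ B) (φ : (freeLift B).ker →+ G) :
    ExtG.map G f (SubQuot.mk _ _ φ rfl) = SubQuot.mk _ _ (φ.comp (extKerMap f)) rfl := rfl

lemma ExtG.map_id :
    ExtG.map G (AddMonoidHom.id A) = AddMonoidHom.id (ExtG A G) := by
  refine SubQuot.hom_ext fun φ hφ => ?_
  show SubQuot.mk _ _ (φ.comp (extKerMap (AddMonoidHom.id A))) rfl = SubQuot.mk _ _ φ hφ
  refine SubQuot.mk_congr _ _ ?_ _ _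
  refine AddMonoidHom.ext fun x => ?_
  show φ (extKerMap (AddMonoidHom.id A) x) = φ x
  refine congrArg φ (Subtype.ext ?_)
  show FreeAbelianGroup.map _ x.1 = x.1
  rw [show ((AddMonoidHom.id A : A → A)) = _root_.id from rfl, FreeAbelianGroup.map_id_apply]

lemma ExtG.map_comp (f : A →+ B) (g : B →+ C') :
    (ExtG.map G f).comp (ExtG.map G g) = ExtG.map G (g.comp f) := by
  refine SubQuot.hom_ext fun φ hφ => ?_
  show SubQuot.mk _ _ ((φ.comp (extKerMap g)).comp (extKerMap f)) rfl
    = SubQuot.mk _ _ (φ.comp (extKerMap (g.comp f))) rfl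
  refine SubQuot.mk_congr _ _ ?_ _ _
  refine AddMonoidHom.ext fun x => ?_
  refine congrArg φ (Subtype.ext ?_)
  show FreeAbelianGroup.map g (FreeAbelianGroup.map f x.1) = FreeAbelianGroup.map (g.comp f) x.1
  rw [show ((g.comp f : A → C')) = (g : B → C') ∘ (f : A → B) from rfl,
    FreeAbelianGroup.map_comp_apply]

end Ext


/-! ## Evaluation morphism of systems and Ext systems over compact subspaces -/

noncomputable section EvalExtSys

variable (G : Type) [AddCommGroup G] (X : Type) [TopologicalSpace X]

/-- The evaluation maps `Hⁿ_s(F;G) → Hom(Hₙ_s(F), G)`, as a morphism of inverse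
systems over the compact subspaces of `X`. -/
def evalHomOver (n : ℕ) :
    HomOver (singCohCptSys G X n) ((singHomoCptSys ℤ X n).homSys G) where
  idx := OrderHom.id
  app F := evalSCoho G n
  natural {i j} h := by
    refine SubQuot.hom_ext fun φ hφ => ?_
    refine AddMonoidHom.ext fun z => ?_
    rcases SubQuot.mk_surjective _ _ z with ⟨b, hb, rfl⟩
    rfl

/-- The inverse system of the groups `Ext(Hₙ₋₁(F), G)` over the compact subspaces of `X`. -/
def extCptSys (n : ℕ) : InvSys (CptSub X) where
  obj F := ExtG (SHomo ℤ ↥F.1 n) G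
  grp _ := inferInstance
  map {F F'} h := ExtG.map G (SHomoMap ℤ (inclC h) n)
  map_refl F := by
    show ExtG.map G (SHomoMap ℤ (inclC (subset_refl F.1)) n) = _
    rw [show inclC (subset_refl F.1) = ContinuousMap.id ↥F.1 from rfl, SHomoMap_id]
    exact ExtG.map_id G
  map_trans {F F' F''} h h' := by
    show (ExtG.map G (SHomoMap ℤ (inclC h) n)).comp (ExtG.map G (SHomoMap ℤ (inclC h') n)) = _
    rw [ExtG.map_comp, SHomoMap_comp]
    rfl

end EvalExtSys


/-! ## Relative singular (co)homology of pairs -/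

noncomputable section RelativeSingular

/-- the underlying continuous map of a map of pairs. -/
def PairMap.toCM {P Q : TopPair} (f : PairMap P Q) : C(P.carrier, Q.carrier) :=
  ⟨f.toFun, f.continuous⟩

/-- the restriction of a map of pairs to the subspaces, as a continuous map. -/
def PairMap.subCM {P Q : TopPair} (f : PairMap P Q) : C(↥P.sub, ↥Q.sub) :=
  ⟨fun a => ⟨f.toFun a.1, f.maps_sub a.1 a.2⟩,
    Continuous.subtype_mk (f.continuous.comp continuous_subtype_val) _⟩

variable (G : Type) [AddCommGroup G]

/-- relative singular chains of a pair: `C_n(X;G)/C_n(A;G)`. -/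
def RSCh (P : TopPair) (n : ℕ) : Type :=
  SCh P.carrier G n ⧸ (mapSCh G (inclX P.sub) n).range

instance (P : TopPair) (n : ℕ) : AddCommGroup (RSCh G P n) :=
  inferInstanceAs (AddCommGroup (_ ⧸ _))

/-- the boundary operator on relative chains. -/
def bdRel (P : TopPair) (n : ℕ) : RSCh G P (n+1) →+ RSCh G P n :=
  QuotientAddGroup.map _ _ (bd G P.carrier n) (by
    intro x hx
    rcases hx with ⟨z, hz⟩
    refine AddSubgroup.mem_comap.mpr ⟨bd G ↥P.sub n z, ?_⟩
    show mapSCh G (inclX P.sub) n (bd G ↥P.sub n z) = bd G P.carrier n x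
    rw [mapSCh_bd, hz])

lemma bdRel_mk (P : TopPair) (n : ℕ) (z : SCh P.carrier G (n+1)) :
    bdRel G P n (QuotientAddGroup.mk z) = QuotientAddGroup.mk (bd G P.carrier n z) := rfl

/-- the relative chain map induced by a map of pairs. -/
def mapRSCh {P Q : TopPair} (f : PairMap P Q) (n : ℕ) : RSCh G P n →+ RSCh G Q n :=
  QuotientAddGroup.map _ _ (mapSCh G f.toCM n) (by
    intro x hx
    rcases hx with ⟨z, hz⟩
    refine AddSubgroup.mem_comap.mpr ⟨mapSCh G f.subCM n z, ?_⟩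
    show mapSCh G (inclX Q.sub) n (mapSCh G f.subCM n z) = mapSCh G f.toCM n x
    rw [← hz, ← mapSCh_comp, ← mapSCh_comp]
    rfl)

lemma mapRSCh_mk {P Q : TopPair} (f : PairMap P Q) (n : ℕ) (z : SCh P.carrier G n) :
    mapRSCh G f n (QuotientAddGroup.mk z) = QuotientAddGroup.mk (mapSCh G f.toCM n z) := rfl

lemma mapRSCh_bdRel {P Q : TopPair} (f : PairMap P Q) (n : ℕ) (b : RSCh G P (n+1)) :
    mapRSCh G f n (bdRel G P n b) = bdRel G Q n (mapRSCh G f (n+1) b) := by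
  refine QuotientAddGroup.induction_on b ?_
  intro z
  rw [bdRel_mk, mapRSCh_mk, mapRSCh_mk, bdRel_mk, mapSCh_bd]

lemma mapRSCh_id (P : TopPair) (n : ℕ) (b : RSCh G P n) :
    mapRSCh G (PairMap.id P) n b = b := by
  refine QuotientAddGroup.induction_on b ?_
  intro z
  rw [mapRSCh_mk]
  exact congrArg _ (mapSCh_id G P.carrier n z)

lemma mapRSCh_comp {P Q R : TopPair} (f : PairMap P Q) (g : PairMap Q R) (n : ℕ)
    (b : RSCh G P n) :
    mapRSCh G (g.comp f) n b = mapRSCh G g n (mapRSCh G f n b) := by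
  refine QuotientAddGroup.induction_on b ?_
  intro z
  rw [mapRSCh_mk, mapRSCh_mk, mapRSCh_mk]
  exact congrArg _ (mapSCh_comp G f.toCM g.toCM n z)

/-- target of the outgoing relative boundary map. -/
def RChPrev (P : TopPair) : ℕ → Type
  | 0 => PUnit
  | (n+1) => RSCh G P n

instance (P : TopPair) : ∀ n, AddCommGroup (RChPrev G P n)
  | 0 => inferInstanceAs (AddCommGroup PUnit)
  | (_+1) => inferInstanceAs (AddCommGroup (RSCh _ _ _))

def bdRelOut (P : TopPair) : ∀ n, RSCh G P n →+ RChPrev G P n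
  | 0 => 0
  | (n+1) => bdRel G P n

/-- The `n`-th relative singular homology group of a pair, with coefficients in `G`. -/
def RSHomo (P : TopPair) (n : ℕ) : Type := SubQuot (bdRel G P n) (bdRelOut G P n)

instance (P : TopPair) (n : ℕ) : AddCommGroup (RSHomo G P n) :=
  inferInstanceAs (AddCommGroup (SubQuot _ _))

lemma bdRelOut_mapRSCh {P Q : TopPair} (f : PairMap P Q) (n : ℕ) (b : RSCh G P n)
    (hb : bdRelOut G P n b = 0) : bdRelOut G Q n (mapRSCh G f n b) = 0 := by
  cases n with
  | zero => rfl
  | succ m =>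
      show bdRel G Q m (mapRSCh G f (m+1) b) = 0
      rw [← mapRSCh_bdRel, show bdRel G P m b = 0 from hb, map_zero]

/-- The map on relative singular homology induced by a map of pairs. -/
def RSHomoMap {P Q : TopPair} (f : PairMap P Q) (n : ℕ) : RSHomo G P n →+ RSHomo G Q n :=
  SubQuot.map (mapRSCh G f n) (bdRelOut_mapRSCh G f n)
    (fun a => ⟨mapRSCh G f (n+1) a, (mapRSCh_bdRel G f n a).symm⟩)

/-- relative singular cochains. -/
abbrev RCo (P : TopPair) (n : ℕ) : Type := RSCh ℤ P n →+ G

/-- the relative coboundary. -/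
def cobdRel (P : TopPair) (n : ℕ) : RCo G P n →+ RCo G P (n+1) := precompHom (bdRel ℤ P n)

def RCoPrev (P : TopPair) : ℕ → Type
  | 0 => PUnit
  | (n+1) => RCo G P n

instance (P : TopPair) : ∀ n, AddCommGroup (RCoPrev G P n)
  | 0 => inferInstanceAs (AddCommGroup PUnit)
  | (_+1) => inferInstanceAs (AddCommGroup (RCo _ _ _))

def cobdRelFrom (P : TopPair) : ∀ n, RCoPrev G P n →+ RCo G P n
  | 0 => 0
  | (n+1) => cobdRel G P n

/-- The `n`-th relative singular cohomology group of a pair, with coefficients in `G`. -/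
def RSCoho (P : TopPair) (n : ℕ) : Type := SubQuot (cobdRelFrom G P n) (cobdRel G P n)

instance (P : TopPair) (n : ℕ) : AddCommGroup (RSCoho G P n) :=
  inferInstanceAs (AddCommGroup (SubQuot _ _))

lemma cobdRel_precomp {P Q : TopPair} (f : PairMap P Q) (n : ℕ) (φ : RCo G Q n)
    (hφ : cobdRel G Q n φ = 0) :
    cobdRel G P n (φ.comp (mapRSCh ℤ f n)) = 0 := by
  refine AddMonoidHom.ext fun z => ?_
  show φ (mapRSCh ℤ f n (bdRel ℤ P n z)) = 0
  rw [mapRSCh_bdRel]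
  exact DFunLike.congr_fun hφ (mapRSCh ℤ f (n+1) z)

lemma cobdRelFrom_precomp {P Q : TopPair} (f : PairMap P Q) (n : ℕ) (a : RCoPrev G Q n) :
    ∃ a' : RCoPrev G P n,
      cobdRelFrom G P n a' = precompHom (mapRSCh ℤ f n) (cobdRelFrom G Q n a) := by
  cases n with
  | zero =>
      exact ⟨PUnit.unit, by
        show (0 : RCo G P 0) = _
        rw [show cobdRelFrom G Q 0 a = 0 from rfl, map_zero]⟩
  | succ m =>
      refine ⟨precompHom (mapRSCh ℤ f m) a, ?_⟩
      refine AddMonoidHom.ext fun z => ?_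
      show (show RSCh ℤ Q m →+ G from a) (mapRSCh ℤ f m (bdRel ℤ P m z))
        = (show RSCh ℤ Q m →+ G from a) (bdRel ℤ Q m (mapRSCh ℤ f (m+1) z))
      rw [mapRSCh_bdRel]

/-- The map on relative singular cohomology induced by a map of pairs. -/
def RSCohoMap {P Q : TopPair} (f : PairMap P Q) (n : ℕ) : RSCoho G Q n →+ RSCoho G P n :=
  SubQuot.map (precompHom (mapRSCh ℤ f n)) (fun φ hφ => cobdRel_precomp G f n φ hφ)
    (cobdRelFrom_precomp G f n)

end RelativeSingular

/-! ## ℤ-indexed singular (co)homology (trivial in negative degrees) -/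

noncomputable section ZIndexed

variable (G : Type) [AddCommGroup G]

/-- absolute integral singular homology, indexed by `ℤ`. -/
def SHomoZ (n : ℤ) (X : Type) [TopologicalSpace X] : Type :=
  match n with
  | .ofNat k => SHomo ℤ X k
  | .negSucc _ => PUnit

instance (n : ℤ) (X : Type) [TopologicalSpace X] : AddCommGroup (SHomoZ n X) :=
  match n with
  | .ofNat _ => inferInstanceAs (AddCommGroup (SHomo _ _ _))
  | .negSucc _ => inferInstanceAs (AddCommGroup PUnit)

/-- the map on `ℤ`-indexed integral singular homology induced by a continuous map. -/
def SHomoZMap (n : ℤ) {X Y : Type} [TopologicalSpace X] [TopologicalSpace Y]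
    (f : C(X,Y)) : SHomoZ n X →+ SHomoZ n Y :=
  match n with
  | .ofNat k => SHomoMap ℤ f k
  | .negSucc _ => 0

/-- relative singular cohomology with coefficients in `G`, indexed by `ℤ`. -/
def RSCohoZ (n : ℤ) (P : TopPair) : Type :=
  match n with
  | .ofNat k => RSCoho G P k
  | .negSucc _ => PUnit

instance (n : ℤ) (P : TopPair) : AddCommGroup (RSCohoZ G n P) :=
  match n with
  | .ofNat _ => inferInstanceAs (AddCommGroup (RSCoho _ _ _))
  | .negSucc _ => inferInstanceAs (AddCommGroup PUnit)

/-- the induced map on `ℤ`-indexed relative singular cohomology. -/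
def RSCohoZMap (n : ℤ) {P Q : TopPair} (f : PairMap P Q) :
    RSCohoZ G n Q →+ RSCohoZ G n P :=
  match n with
  | .ofNat k => RSCohoMap G f k
  | .negSucc _ => 0

/-- relative singular homology with coefficients in `G`, indexed by `ℤ`. -/
def RSHomoZ (n : ℤ) (P : TopPair) : Type :=
  match n with
  | .ofNat k => RSHomo G P k
  | .negSucc _ => PUnit

instance (n : ℤ) (P : TopPair) : AddCommGroup (RSHomoZ G n P) :=
  match n with
  | .ofNat _ => inferInstanceAs (AddCommGroup (RSHomo _ _ _))
  | .negSucc _ => inferInstanceAs (AddCommGroup PUnit)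

/-- the induced map on `ℤ`-indexed relative singular homology. -/
def RSHomoZMap (n : ℤ) {P Q : TopPair} (f : PairMap P Q) :
    RSHomoZ G n P →+ RSHomoZ G n Q :=
  match n with
  | .ofNat k => RSHomoMap G f k
  | .negSucc _ => 0

end ZIndexed


/-! ## The universal coefficients formula axiom (UCF) -/

/-- A continuous map as a map of the associated pairs (with empty subspaces). -/
def PairMap.ofCM {X Y : Type} [TopologicalSpace X] [TopologicalSpace Y] (f : C(X,Y)) :
    PairMap (TopPair.ofSpace X) (TopPair.ofSpace Y) :=
  ⟨f, f.continuous, fun x hx => absurd hx (Set.notMem_empty x)⟩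

/-- Universal coefficients formula data for a cohomological sequence `T` with
coefficient group `G` on the subcategory `Obj`: functorial exact sequences
`0 → Ext(Hˢₙ₋₁(X), G) → Hⁿ(X;G) → Hom(Hˢₙ(X), G) → 0`. -/
structure UCFData (T : CohSeq) (G : Type) [AddCommGroup G] (Obj : TopPair → Prop) :
    Type 1 where
  extHom : ∀ (n : ℤ) (X : Type) [TopologicalSpace X],
    ExtG (SHomoZ (n-1) X) G →+ T.H n (TopPair.ofSpace X)
  homHom : ∀ (n : ℤ) (X : Type) [TopologicalSpace X],
    T.H n (TopPair.ofSpace X) →+ (SHomoZ n X →+ G)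
  injective : ∀ (n : ℤ) (X : Type) [TopologicalSpace X], Obj (TopPair.ofSpace X) →
    Function.Injective (extHom n X)
  exact : ∀ (n : ℤ) (X : Type) [TopologicalSpace X], Obj (TopPair.ofSpace X) →
    (extHom n X).range = (homHom n X).ker
  surjective : ∀ (n : ℤ) (X : Type) [TopologicalSpace X], Obj (TopPair.ofSpace X) →
    Function.Surjective (homHom n X)
  natural_ext : ∀ (n : ℤ) {X Y : Type} [TopologicalSpace X] [TopologicalSpace Y],
    Obj (TopPair.ofSpace X) → Obj (TopPair.ofSpace Y) → ∀ (g : C(X,Y)),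
    (extHom n X).comp (ExtG.map G (SHomoZMap (n-1) g))
      = (T.map n (PairMap.ofCM g)).comp (extHom n Y)
  natural_hom : ∀ (n : ℤ) {X Y : Type} [TopologicalSpace X] [TopologicalSpace Y],
    Obj (TopPair.ofSpace X) → Obj (TopPair.ofSpace Y) → ∀ (g : C(X,Y)),
    (homHom n X).comp (T.map n (PairMap.ofCM g))
      = (precompHom (SHomoZMap n g)).comp (homHom n Y)

/-! ## Cohomology bifunctors (varying coefficients) -/

/-- A cohomological sequence which is also functorial in the coefficient group
(a bifunctor), with connecting homomorphisms `δ`. -/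
structure CohBi : Type 1 where
  H : ∀ (n : ℤ) (P : TopPair) (G : Type) [AddCommGroup G], Type
  grp : ∀ (n : ℤ) (P : TopPair) (G : Type) [AddCommGroup G], AddCommGroup (H n P G)
  map : ∀ (n : ℤ) {P Q : TopPair} (f : PairMap P Q) (G : Type) [AddCommGroup G],
    H n Q G →+ H n P G
  map_id : ∀ (n : ℤ) (P : TopPair) (G : Type) [AddCommGroup G],
    map n (PairMap.id P) G = AddMonoidHom.id (H n P G)
  map_comp : ∀ (n : ℤ) {P Q R : TopPair} (f : PairMap P Q) (g : PairMap Q R)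
    (G : Type) [AddCommGroup G], map n (g.comp f) G = (map n f G).comp (map n g G)
  cmap : ∀ (n : ℤ) (P : TopPair) {G G' : Type} [AddCommGroup G] [AddCommGroup G']
    (φ : G →+ G'), H n P G →+ H n P G'
  cmap_id : ∀ (n : ℤ) (P : TopPair) (G : Type) [AddCommGroup G],
    cmap n P (AddMonoidHom.id G) = AddMonoidHom.id (H n P G)
  cmap_comp : ∀ (n : ℤ) (P : TopPair) {G G' G'' : Type} [AddCommGroup G]
    [AddCommGroup G'] [AddCommGroup G''] (φ : G →+ G') (ψ : G' →+ G''),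
    (cmap n P ψ).comp (cmap n P φ) = cmap n P (ψ.comp φ)
  cmap_map : ∀ (n : ℤ) {P Q : TopPair} (f : PairMap P Q) {G G' : Type}
    [AddCommGroup G] [AddCommGroup G'] (φ : G →+ G'),
    (cmap n P φ).comp (map n f G) = (map n f G').comp (cmap n Q φ)
  δ : ∀ (n : ℤ) (P : TopPair) (G : Type) [AddCommGroup G],
    H n P.subPair G →+ H (n+1) P G
  δ_natural : ∀ (n : ℤ) {P Q : TopPair} (f : PairMap P Q) (G : Type) [AddCommGroup G],
    (δ n P G).comp (map n f.restrictSub G) = (map (n+1) f G).comp (δ n Q G)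

attribute [instance] CohBi.grp

namespace CohBi

/-- the cohomology theory at a fixed coefficient group. -/
def at_ (T : CohBi) (G : Type) [AddCommGroup G] : CohTheory where
  H n P := T.H n P G
  grp n P := T.grp n P G
  map n {P Q} f := T.map n f G
  map_id n P := T.map_id n P G
  map_comp n {P Q R} f g := T.map_comp n f g G
  δ n P := T.δ n P G
  δ_natural n {P Q} f := T.δ_natural n f G

/-- A short exact sequence of abelian groups. -/
def ShortExact {G G' G'' : Type} [AddCommGroup G] [AddCommGroup G'] [AddCommGroup G'']
    (φ : G →+ G') (ψ : G' →+ G'') : Prop :=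
  Function.Injective φ ∧ φ.range = ψ.ker ∧ Function.Surjective ψ

/-- EFSA: the bifunctor is an exact functor of the second (coefficient) argument:
every short exact sequence of coefficient groups induces a functorial long exact
sequence of cohomology groups. -/
def EFSA (T : CohBi) (Obj : TopPair → Prop) : Prop :=
  ∀ {G G' G'' : Type} [AddCommGroup G] [AddCommGroup G'] [AddCommGroup G'']
    (φ : G →+ G') (ψ : G' →+ G''), ShortExact φ ψ →
    ∃ β : ∀ (n : ℤ) (P : TopPair), T.H n P G'' →+ T.H (n+1) P G,
      (∀ (P : TopPair), Obj P → ∀ n : ℤ,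
        ((T.cmap n P φ).range = (T.cmap n P ψ).ker) ∧
        ((T.cmap n P ψ).range = (β n P).ker) ∧
        ((β n P).range = (T.cmap (n+1) P φ).ker)) ∧
      (∀ {P Q : TopPair}, Obj P → Obj Q → ∀ (f : PairMap P Q) (n : ℤ),
        (β n P).comp (T.map n f G'') = (T.map (n+1) f G).comp (β n Q))

/-- CSI: compact supports for injective coefficient groups: for every injective
abelian group `G` and every space `X` of the category, the canonical map
`Hⁿ(X;G) → lim Hⁿ(F;G)` over the compact subspaces of `X` is an isomorphism. -/
def CSI (T : CohBi) (Obj : TopPair → Prop) : Prop :=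
  ∀ (G : Type) [AddCommGroup G], CategoryTheory.Injective (AddCommGrpCat.of G) →
    ∀ (X : Type) [TopologicalSpace X], Obj (TopPair.ofSpace X) →
    ∀ n : ℤ, Function.Bijective ((T.at_ G).toCohSeq.toCptLim n (TopPair.ofSpace X))

end CohBi

/-- the one-point pair. -/
def ptPair : TopPair := TopPair.ofSpace PUnit


/-! ## The four axiomatic systems ("senses") for cohomology theories on `K²_CW` -/

/-- A cohomology theory in the Milnor sense on `K²_CW`: an Eilenberg–Steenrod
cohomology theory satisfying the additivity axiom. -/
def CohTheory.IsMilnorSense (T : CohTheory) : Prop :=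
  T.IsES IsCWPair ∧ T.AdditivityAxiom IsCWPair

/-- A cohomology theory in the Mdzinarishvili sense on `K²_CW`: a nontrivial internal
extension of an Eilenberg–Steenrod cohomology theory on compact polyhedral pairs, i.e.
(1_NT) restriction to `K²_PolC` is an ES theory, (2_NT)+(3_NT) natural short exact
sequences `0 → lim¹ Hⁿ⁻¹(F_α,E_α) → Hⁿ(X,A) → lim Hⁿ(F_α,E_α) → 0`, and (4_NT) the
exactness axiom on `K²_CW`. -/
def CohTheory.IsMdzSense (T : CohTheory) : Prop :=
  T.IsES IsCompactPolyhedralPair ∧ T.ExactnessAxiom IsCWPair ∧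
  ∃ E : NTSes T.toCohSeq IsCWPair, E.Natural

/-- A cohomology theory in the Berikashvili–Mdzinarishvili–Beridze sense on `K²_CW`:
an extension of an ES theory on compact polyhedral pairs satisfying the exactness
axiom and the universal coefficients formula on `K²_CW`. -/
def CohTheory.IsBMBSense (T : CohTheory) (G : Type) [AddCommGroup G] : Prop :=
  T.IsES IsCompactPolyhedralPair ∧ T.ExactnessAxiom IsCWPair ∧
  Nonempty (UCFData T.toCohSeq G IsCWPair)

/-- A cohomology theory in the Inasaridze–Mdzinarishvili–Beridze sense on `K²_CW`:
an extension of an ES theory on compact polyhedral pairs which is an exact functor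
of the second argument and has compact supports for injective coefficient groups. -/
def CohBi.IsIMBSense (T : CohBi) : Prop :=
  (∀ (G : Type) [AddCommGroup G], (T.at_ G).IsES IsCompactPolyhedralPair) ∧
  T.EFSA IsCWPair ∧ T.CSI IsCWPair


/-!
A `1`-cocycle of the Roos complex of `Hom(A, G)` is a family `x_{ij} : A_i → G` (`i ≤ j`) with
`x_{jk} ∘ φ_{ij} - x_{ik} + x_{ij} = 0`, i.e. a homomorphism `x : ⨁_{i ≤ j} A_i → G` satisfying
this identity. It vanishes on the kernel of the bar boundary `∂ : ⨁_{i ≤ j} A_i → ⨁_i A_i`: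
choosing, by directedness, `t` above all indices of a chain `z`, the identity at `i ≤ j ≤ t`
gives `x z = -h_t (∂ z)` with `h_t = (x_{it})_i`. Hence `x` factors through `∂`, and injectivity
of `G` extends the factorisation to `Y : ⨁_i A_i → G`, whose components form a `0`-cochain `y`
with `dy = x`.
-/

theorem exists_comp_eq_of_ker_le_of_injective {G : Type} [AddCommGroup G]
    (hG : CategoryTheory.Injective (AddCommGrpCat.of G)) {M N : Type} [AddCommGroup M]
    [AddCommGroup N] (f : M →+ N) (g : M →+ G) (hfg : f.ker ≤ g.ker) :
    ∃ Y : N →+ G, Y.comp f = g := by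
  have hBaer : Module.Baer ℤ G :=
    have := Module.injective_module_of_injective_object ℤ G
      (inj := (AddCommGrpCat.injective_as_module_iff G).mpr hG)
    Module.Baer.of_injective this
  obtain ⟨Y, hY⟩ := hBaer.extension_property_addMonoidHom (QuotientAddGroup.kerLift f)
    (QuotientAddGroup.kerLift_injective f) (QuotientAddGroup.lift f.ker g hfg)
  exact ⟨Y, AddMonoidHom.ext fun m => DFunLike.congr_fun hY (m : M ⧸ f.ker)⟩

namespace InvSys

variable {B : Type} [Preorder B] (S : InvSys B)

theorem subsingleton_lim1_of_forall_exists_d_eq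
    (h : ∀ x : S.C 1, S.d 1 x = 0 → ∃ y : S.C 0, S.d 0 y = x) : Subsingleton S.lim1 := by
  refine subsingleton_of_forall_eq 0 fun z => ?_
  obtain ⟨x, hx, rfl⟩ := SubQuot.mk_surjective _ _ z
  obtain ⟨y, hy⟩ := h x hx
  exact (QuotientAddGroup.eq_zero_iff _).mpr (AddSubgroup.mem_addSubgroupOf.mpr ⟨y, hy⟩)

end InvSys

namespace Chain

variable {B : Type} [Preorder B]

def mk₁ (i j : B) (h : i ≤ j) : Chain B 1 :=
  ⟨![i, j], Fin.monotone_iff_le_succ.2 fun k => by fin_cases k; exact h⟩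

def mk₂ (i j k : B) (hij : i ≤ j) (hjk : j ≤ k) : Chain B 2 :=
  ⟨![i, j, k], Fin.monotone_iff_le_succ.2 fun l => by fin_cases l; exacts [hij, hjk]⟩

theorem eq_mk₁ (c : Chain B 1) : c = mk₁ (c 0) (c 1) (c.monotone (Fin.zero_le 1)) := by
  ext l; fin_cases l <;> rfl

variable (i j k : B) (hij : i ≤ j) (hjk : j ≤ k)

theorem face_mk₂_zero : face (mk₂ i j k hij hjk) 0 = mk₁ j k hjk := by
  ext l; fin_cases l <;> rfl

theorem face_mk₂_one : face (mk₂ i j k hij hjk) 1 = mk₁ i k (hij.trans hjk) := by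
  ext l; fin_cases l <;> rfl

theorem face_mk₂_two : face (mk₂ i j k hij hjk) 2 = mk₁ i j hij := by
  ext l; fin_cases l <;> rfl

end Chain

noncomputable section

namespace DirSys

open DirectSum
open scoped Classical

variable {B : Type} [Preorder B] (D : DirSys B) {G : Type} [AddCommGroup G]

theorem map_self {i : B} (h : i ≤ i) (a : D.obj i) : D.map h a = a :=
  DFunLike.congr_fun (D.map_refl i) a

theorem homSys_d_apply (n : ℕ) (y : ∀ c : Chain B n, D.obj (c 0) →+ G) (c : Chain B (n + 1))
    (a : D.obj (c 0)) :
    DFunLike.coe (F := D.obj (c 0) →+ G) ((D.homSys G).d n y c) a =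
      y (c.face 0) (D.map (c.monotone (Fin.zero_le _)) a) +
        ∑ k : Fin (n + 1), (-1 : ℤ) ^ ((k : ℕ) + 1) •
          y (c.face k.succ) (D.map (Chain.face_succ_zero c k).symm.le a) := by
  have h : ((D.homSys G).d n y c : D.obj (c 0) →+ G) =
      (y (c.face 0)).comp (D.map (c.monotone (Fin.zero_le _))) +
        ∑ k : Fin (n + 1), (-1 : ℤ) ^ ((k : ℕ) + 1) •
          (y (c.face k.succ)).comp (D.map (Chain.face_succ_zero c k).symm.le) :=
    (D.homSys G).d_apply n y c
  rw [h]
  simp only [AddMonoidHom.add_apply, AddMonoidHom.finsetSum_apply, AddMonoidHom.smul_apply,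
    AddMonoidHom.comp_apply]
  rfl

theorem homSys_d_zero_apply (y : ∀ c : Chain B 0, D.obj (c 0) →+ G) (c : Chain B 1)
    (a : D.obj (c 0)) :
    DFunLike.coe (F := D.obj (c 0) →+ G) ((D.homSys G).d 0 y c) a =
      y (c.face 0) (D.map (c.monotone (Fin.zero_le _)) a) -
        y (c.face 1) (D.map (Chain.face_succ_zero c 0).symm.le a) := by
  rw [homSys_d_apply, Fin.sum_univ_one]
  simp [sub_eq_add_neg]

theorem homSys_d_one_apply (x : ∀ c : Chain B 1, D.obj (c 0) →+ G) (c : Chain B 2)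
    (a : D.obj (c 0)) :
    DFunLike.coe (F := D.obj (c 0) →+ G) ((D.homSys G).d 1 x c) a =
      x (c.face 0) (D.map (c.monotone (Fin.zero_le _)) a) -
        x (c.face 1) (D.map (Chain.face_succ_zero c 0).symm.le a) +
          x (c.face 2) (D.map (Chain.face_succ_zero c 1).symm.le a) := by
  rw [homSys_d_apply, Fin.sum_univ_two]
  simp [sub_eq_add_neg, add_assoc]

def cochainAt (x : ∀ c : Chain B 1, D.obj (c 0) →+ G) {i j : B} (h : i ≤ j) : D.obj i →+ G :=
  x (.mk₁ i j h)

theorem cochain_apply_eq_cochainAt (x : ∀ c : Chain B 1, D.obj (c 0) →+ G) {c : Chain B 1}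
    {i j : B} {h : i ≤ j} (e : c = .mk₁ i j h) {b : B} (p : b ≤ c 0) (q : b ≤ i) (a : D.obj b) :
    x c (D.map p a) = D.cochainAt x h (D.map q a) := by
  subst e; rfl

theorem cochain_apply_eq_cochainAt_self (x : ∀ c : Chain B 1, D.obj (c 0) →+ G)
    {c : Chain B 1} {i j : B} {h : i ≤ j} (e : c = .mk₁ i j h) (p : i ≤ c 0) (a : D.obj i) :
    x c (D.map p a) = D.cochainAt x h a :=
  (D.cochain_apply_eq_cochainAt x e p le_rfl a).trans (congrArg _ (D.map_self _ a))

theorem cochainAt_map_sub_add_eq_zero {x : ∀ c : Chain B 1, D.obj (c 0) →+ G}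
    (hx : (D.homSys G).d 1 x = 0) {i j k : B} (hij : i ≤ j) (hjk : j ≤ k) (a : D.obj i) :
    D.cochainAt x hjk (D.map hij a) - D.cochainAt x (hij.trans hjk) a + D.cochainAt x hij a = 0 := by
  have h := D.homSys_d_one_apply x (.mk₂ i j k hij hjk) a
  rw [hx] at h
  refine Eq.trans ?_ h.symm
  exact congrArg₂ (· + ·) (congrArg₂ (· - ·)
    (D.cochain_apply_eq_cochainAt x (Chain.face_mk₂_zero i j k hij hjk) _ hij a).symm
    (D.cochain_apply_eq_cochainAt_self x (Chain.face_mk₂_one i j k hij hjk) _ a).symm)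
    (D.cochain_apply_eq_cochainAt_self x (Chain.face_mk₂_two i j k hij hjk) _ a).symm

/-- Its cokernel is `colim A`. -/
def barBoundary : (⨁ c : Chain B 1, D.obj (c 0)) →+ ⨁ i, D.obj i :=
  toAddMonoid fun c => (of _ (c 1)).comp (D.map (c.monotone (Fin.zero_le 1))) - of _ (c 0)

theorem barBoundary_of (c : Chain B 1) (a : D.obj (c 0)) :
    D.barBoundary (of _ c a) = of _ (c 1) (D.map (c.monotone (Fin.zero_le 1)) a) - of _ (c 0) a := by
  rw [barBoundary, toAddMonoid_of]; rfl

def cocycleCone (x : ∀ c : Chain B 1, D.obj (c 0) →+ G) (t : B) : (⨁ i, D.obj i) →+ G :=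
  toAddMonoid fun i => if h : i ≤ t then D.cochainAt x h else 0

theorem cocycleCone_of (x : ∀ c : Chain B 1, D.obj (c 0) →+ G) {i t : B} (h : i ≤ t)
    (a : D.obj i) : D.cocycleCone x t (of _ i a) = D.cochainAt x h a := by
  rw [cocycleCone, toAddMonoid_of, dif_pos h]

theorem cocycle_apply_eq_neg_cocycleCone {x : ∀ c : Chain B 1, D.obj (c 0) →+ G}
    (hx : (D.homSys G).d 1 x = 0) {t : B} (c : Chain B 1) (hct : c 1 ≤ t) (a : D.obj (c 0)) :
    x c a = -D.cocycleCone x t (D.barBoundary (of _ c a)) := by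
  have hc := c.monotone (Fin.zero_le 1)
  calc x c a = D.cochainAt x hc a := by
        simpa only [D.map_self] using D.cochain_apply_eq_cochainAt_self x c.eq_mk₁ le_rfl a
    _ = D.cochainAt x (hc.trans hct) a - D.cochainAt x hct (D.map hc a) := by
      rw [← sub_eq_zero, ← D.cochainAt_map_sub_add_eq_zero hx hc hct a]; abel
    _ = -D.cocycleCone x t (D.barBoundary (of _ c a)) := by
      rw [barBoundary_of, map_sub, D.cocycleCone_of x hct, D.cocycleCone_of x (hc.trans hct),
        neg_sub]

theorem toAddMonoid_eq_neg_cocycleCone {x : ∀ c : Chain B 1, D.obj (c 0) →+ G}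
    (hx : (D.homSys G).d 1 x = 0) {t : B} (z : ⨁ c : Chain B 1, D.obj (c 0))
    (hz : ∀ c ∈ z.support, c 1 ≤ t) :
    toAddMonoid x z = -D.cocycleCone x t (D.barBoundary z) := by
  rw [← sum_support_of z]
  simp only [map_sum, toAddMonoid_of, ← Finset.sum_neg_distrib]
  exact Finset.sum_congr rfl fun c hc => D.cocycle_apply_eq_neg_cocycleCone hx c (hz c hc) (z c)

theorem ker_barBoundary_le_ker_toAddMonoid [IsDirected B (· ≤ ·)]
    {x : ∀ c : Chain B 1, D.obj (c 0) →+ G} (hx : (D.homSys G).d 1 x = 0) :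
    D.barBoundary.ker ≤ (toAddMonoid x).ker := by
  intro z hz
  rw [AddMonoidHom.mem_ker] at hz ⊢
  rcases isEmpty_or_nonempty B with hB | hB
  · have : IsEmpty (Chain B 1) := ⟨fun c => isEmptyElim (c 0)⟩
    rw [Subsingleton.elim z 0, map_zero]
  obtain ⟨t, ht⟩ := (z.support.image fun c => c 1).exists_le
  rw [D.toAddMonoid_eq_neg_cocycleCone hx z fun c hc => ht _ (Finset.mem_image_of_mem _ hc), hz,
    map_zero, neg_zero]

theorem homSys_exists_d_zero_eq [IsDirected B (· ≤ ·)]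
    (hG : CategoryTheory.Injective (AddCommGrpCat.of G)) (x : ∀ c : Chain B 1, D.obj (c 0) →+ G)
    (hx : (D.homSys G).d 1 x = 0) : ∃ y : (D.homSys G).C 0, (D.homSys G).d 0 y = x := by
  obtain ⟨Y, hY⟩ := exists_comp_eq_of_ker_le_of_injective hG D.barBoundary (toAddMonoid x)
    (D.ker_barBoundary_le_ker_toAddMonoid hx)
  refine ⟨fun b => Y.comp (of _ (b 0)), funext fun c => AddMonoidHom.ext fun a => ?_⟩
  have hc := c.monotone (Fin.zero_le 1)
  calc DFunLike.coe (F := D.obj (c 0) →+ G) ((D.homSys G).d 0 (fun b => Y.comp (of _ (b 0))) c) a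
      = Y (of _ (c 1) (D.map hc a)) - Y (of _ (c 0) a) := by
        rw [homSys_d_zero_apply]
        exact congrArg (fun v => Y (of _ (c 1) (D.map hc a)) - Y (of _ (c 0) v)) (D.map_self _ a)
    _ = Y (D.barBoundary (of _ c a)) := by rw [barBoundary_of, map_sub]
    _ = x c a := by rw [← AddMonoidHom.comp_apply, hY, toAddMonoid_of]

end DirSys

end

/-- **Statement 16.** For a direct system `{A_β}` of abelian groups over a directed set and
an injective abelian group `G`, the first derived functor of the inverse limit of the
inverse system `{Hom(A_β, G)}` vanishes: `lim¹ Hom(A_β, G) = 0`. -/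
theorem lim1_hom_of_injective_eq_zero {B : Type} [Preorder B]
    (hdir : IsDirected B (· ≤ ·)) (D : DirSys B)
    (G : Type) [AddCommGroup G]
    (hG : CategoryTheory.Injective (AddCommGrpCat.of G)) :
    Subsingleton ((D.homSys G).lim1) :=
  (D.homSys G).subsingleton_lim1_of_forall_exists_d_eq fun x hx => D.homSys_exists_d_zero_eq hG x hx

end Paper
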